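/- arXiv:2407.19496 — 5 statements merged into one kernel-verified Lean document; each statement's English description precedes it below -/
import Mathlib

section
/- Fix t₀ ∈ ℝ, T > 0, b > 0 and a continuous function μ : [t₀, t₀+T) → [b, ∞). Let E₁, E₂ be real normed vector spaces, let V₁ : E₁ → ℝ and V₂ : E₂ → ℝ be functions, let α̲₁, ᾱ₁, α̲₂, ᾱ₂, α₁, α₂, γ₁, γ₂ be class-K∞ functions, and let l₁, l₂ > 0 and ε̄₁, ε̄₂ ≥ 0 be constants such that: (i) α̲ᵢ(‖x‖) ≤ Vᵢ(x) ≤ ᾱᵢ(‖x‖) for all x ∈ Eᵢ (i = 1,2); (ii) l₁·l₂ < 1; (iii) M := sup_{s>0} (γ₁(s)+γ₂(s))/min{α₁(s), α₂(s)} < ∞. Then there exists a continuous strictly increasing function α̃ : [0,∞) → [0,∞) such that: for every pair of continuous trajectories χ₁ : [t₀, t₀+T) → E₁ and χ₂ : [t₀, t₀+T) → E₂ for which the maps t ↦ V₁(χ₁(t)) and t ↦ V₂(χ₂(t)) are differentiable on [t₀, t₀+T) with derivatives satisfying, for all t ∈ [t₀, t₀+T), (d/dt)V₁(χ₁(t))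 ≤ −α₁(μ(t))·V₁(χ₁(t)) + l₁·α₂(μ(t))·V₂(χ₂(t)) + γ₁(μ(t))·ε̄₁ and (d/dt)V₂(χ₂(t)) ≤ −α₂(μ(t))·V₂(χ₂(t)) + l₂·α₁(μ(t))·V₁(χ₁(t)) + γ₂(μ(t))·ε̄₂, one has ‖χ₁(t)‖ + ‖χ₂(t)‖ ≤ α̃(‖χ₁(t₀)‖ + ‖χ₂(t₀)‖) for every t ∈ [t₀, t₀+T). -/
/-!
Choose a weight `c` with `l₂ < c < 1 / l₁`, possible because `l₁ l₂ < 1`. Along trajectories the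
composite function `W = c V₁ + V₂` satisfies
`Ẇ ≤ m · (max c 1 · M · max ε₁ ε₂ - η (V₁ + V₂))` with `m = min (α₁ μ) (α₂ μ)` and
`η = min (c - l₂) (1 - c l₁) > 0`, since `γ₁ + γ₂ ≤ M m` lets the decay dominate the disturbance.
So `Ẇ ≤ 0` as soon as `W` exceeds a level `K` independent of `μ`, and `W` stays below
`max (W t₀) K` however fast `μ` grows. The sandwich bounds turn this into the norm estimate, with
`α̃` built from the inverses of `α̲₁` and `α̲₂`.
-/

open Set Filter Topology

def ClassKInf (α : ℝ → ℝ) : Prop :=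
  ContinuousOn α (Ici 0) ∧ StrictMonoOn α (Ici 0) ∧ α 0 = 0 ∧
    Tendsto α atTop atTop

namespace ClassKInf

variable {α : ℝ → ℝ}

lemma nonneg (h : ClassKInf α) {x : ℝ} (hx : 0 ≤ x) : 0 ≤ α x :=
  h.2.2.1 ▸ h.2.1.monotoneOn self_mem_Ici hx hx

lemma pos (h : ClassKInf α) {x : ℝ} (hx : 0 < x) : 0 < α x :=
  h.2.2.1 ▸ h.2.1 self_mem_Ici hx.le hx

lemma surjOn (h : ClassKInf α) : SurjOn α (Ici 0) (Ici 0) := by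
  intro y hy
  obtain ⟨s, hys, hs⟩ := ((h.2.2.2.eventually_ge_atTop y).and (eventually_ge_atTop 0)).exists
  obtain ⟨x, hx, rfl⟩ := intermediate_value_Icc hs (h.1.mono Icc_subset_Ici_self)
    ⟨h.2.2.1.symm ▸ hy, hys⟩
  exact ⟨x, hx.1, rfl⟩

lemma exists_leftInvOn (h : ClassKInf α) :
    ∃ ψ : ℝ → ℝ, ContinuousOn ψ (Ici 0) ∧ StrictMonoOn ψ (Ici 0) ∧ LeftInvOn ψ α (Ici 0) := by
  let F : Ici (0 : ℝ) → Ici (0 : ℝ) := fun x => ⟨α x, h.nonneg x.2⟩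
  have hF : StrictMono F := fun x y hxy => h.2.1 x.2 y.2 hxy
  have hF_surj : Function.Surjective F := fun y =>
    let ⟨x, hx, hxy⟩ := h.surjOn y.2
    ⟨⟨x, hx⟩, Subtype.ext hxy⟩
  let e := hF.orderIsoOfSurjective F hF_surj
  refine ⟨fun y => e.symm (projIci 0 y), ?_, ?_, fun x hx => ?_⟩
  · exact (continuous_subtype_val.comp
      (e.symm.continuous.comp ((continuous_const.max continuous_id).subtype_mk _))).continuousOn
  · intro x hx y hy hxy
    refine e.symm.strictMono ?_
    rwa [projIci_of_mem hx, projIci_of_mem hy, Subtype.mk_lt_mk]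
  · change (e.symm (projIci 0 (F ⟨x, hx⟩)) : ℝ) = x
    rw [projIci_of_mem (F ⟨x, hx⟩).2]
    exact congrArg Subtype.val (e.symm_apply_apply ⟨x, hx⟩)

lemma add_le_mul_min {α₁ α₂ γ₁ γ₂ : ℝ → ℝ} (hα₁ : ClassKInf α₁) (hα₂ : ClassKInf α₂)
    {M s : ℝ} (hs : 0 < s) (hM : (γ₁ s + γ₂ s) / min (α₁ s) (α₂ s) ≤ M) :
    γ₁ s + γ₂ s ≤ M * min (α₁ s) (α₂ s) :=
  (div_le_iff₀ (lt_min (hα₁.pos hs) (hα₂.pos hs))).1 hM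

end ClassKInf

theorem image_le_max_of_hasDerivAt_nonpos_above {f : ℝ → ℝ} {a b K : ℝ}
    (hf : ∀ x ∈ Icc a b, ∃ d, HasDerivAt f d x ∧ (K ≤ f x → d ≤ 0)) :
    ∀ x ∈ Icc a b, f x ≤ max (f a) K := by
  choose! f' hf' hf'_nonpos using hf
  have hcont : ContinuousOn f (Icc a b) := fun x hx =>
    (hf' x hx).continuousAt.continuousWithinAt
  -- the fencing lemma needs a strict inequality at contact, hence the tilted barriers and `r → 0⁺`
  have hr : ∀ r > 0, ∀ x ∈ Icc a b, f x ≤ max (f a) K + r * (x - a) := by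
    intro r hr
    refine image_le_of_deriv_right_lt_deriv_boundary hcont
      (fun x hx => (hf' x (Ico_subset_Icc_self hx)).hasDerivWithinAt) (by simp)
      (fun x => ((hasDerivAt_id x).sub_const a).const_mul r |>.const_add _) ?_
    intro x hx hfx
    have hK : K ≤ f x := hfx ▸ (le_max_right _ _).trans
      (le_add_of_nonneg_right (mul_nonneg hr.le (sub_nonneg.2 hx.1)))
    simpa using (hf'_nonpos x (Ico_subset_Icc_self hx) hK).trans_lt hr
  intro x hx
  refine ge_of_tendsto (x := 𝓝[>] (0 : ℝ)) ?_ (eventually_nhdsWithin_of_forall fun r hr' =>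
    hr r hr' x hx)
  exact ((continuous_const.add (continuous_id.mul continuous_const)).tendsto' 0 _
    (by simp)).mono_left nhdsWithin_le_nhds

theorem exists_small_gain_weight {l₁ l₂ : ℝ} (hl₁ : 0 < l₁) (hl₂ : 0 < l₂) (hll : l₁ * l₂ < 1) :
    ∃ c, 0 < c ∧ l₂ < c ∧ c * l₁ < 1 := by
  obtain ⟨c, hl₂c, hcl₁⟩ := exists_between ((lt_div_iff₀' hl₁).2 hll : l₂ < 1 / l₁)
  exact ⟨c, hl₂.trans hl₂c, hl₂c, (lt_div_iff₀ hl₁).1 hcl₁⟩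

theorem small_gain_weighted_le {c l₁ l₂ A₁ A₂ v₁ v₂ : ℝ} (hl₂c : l₂ ≤ c) (hcl₁ : c * l₁ ≤ 1)
    (hA₁ : 0 ≤ A₁) (hA₂ : 0 ≤ A₂) (hv₁ : 0 ≤ v₁) (hv₂ : 0 ≤ v₂) :
    c * (-A₁ * v₁ + l₁ * A₂ * v₂) + (-A₂ * v₂ + l₂ * A₁ * v₁) ≤
      -(min (c - l₂) (1 - c * l₁) * min A₁ A₂ * (v₁ + v₂)) := by
  have hm : 0 ≤ min A₁ A₂ := le_min hA₁ hA₂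
  have h₁ : min (c - l₂) (1 - c * l₁) * min A₁ A₂ * v₁ ≤ (c - l₂) * A₁ * v₁ := by
    gcongr <;> exact min_le_left _ _
  have h₂ : min (c - l₂) (1 - c * l₁) * min A₁ A₂ * v₂ ≤ (1 - c * l₁) * A₂ * v₂ := by
    gcongr <;> exact min_le_right _ _
  linear_combination h₁ + h₂

theorem weighted_deriv_nonpos_of_le {c l₁ l₂ A₁ A₂ G₁ G₂ ε₁ ε₂ M K v₁ v₂ d₁ d₂ : ℝ}
    (hc : 0 ≤ c) (hl₂c : l₂ ≤ c) (hcl₁ : c * l₁ ≤ 1)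
    (hA₁ : 0 ≤ A₁) (hA₂ : 0 ≤ A₂) (hG₁ : 0 ≤ G₁) (hG₂ : 0 ≤ G₂)
    (hGA : G₁ + G₂ ≤ M * min A₁ A₂) (hε₁ : 0 ≤ ε₁)
    (hK : max c 1 ^ 2 * M * max ε₁ ε₂ ≤ min (c - l₂) (1 - c * l₁) * K)
    (hv₁ : 0 ≤ v₁) (hv₂ : 0 ≤ v₂) (hKv : K ≤ c * v₁ + v₂)
    (hd₁ : d₁ ≤ -A₁ * v₁ + l₁ * A₂ * v₂ + G₁ * ε₁)
    (hd₂ : d₂ ≤ -A₂ * v₂ + l₂ * A₁ * v₁ + G₂ * ε₂) :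
    c * d₁ + d₂ ≤ 0 := by
  set η := min (c - l₂) (1 - c * l₁)
  set m := min A₁ A₂
  set cmax := max c 1
  set ε := max ε₁ ε₂
  have hη : 0 ≤ η := le_min (by linarith) (by linarith)
  have hm : 0 ≤ m := le_min hA₁ hA₂
  have hcmax : 0 < cmax := zero_lt_one.trans_le (le_max_right _ _)
  have hε : 0 ≤ ε := hε₁.trans (le_max_left _ _)
  have h_gain := small_gain_weighted_le hl₂c hcl₁ hA₁ hA₂ hv₁ hv₂
  have h_dist : c * (G₁ * ε₁) + G₂ * ε₂ ≤ cmax * ε * (M * m) := by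
    have hcε₁ : c * ε₁ ≤ cmax * ε := mul_le_mul (le_max_left _ _) (le_max_left _ _) hε₁ hcmax.le
    have hε₂ε : ε₂ ≤ cmax * ε :=
      (le_max_right _ _).trans (le_mul_of_one_le_left hε (le_max_right _ _))
    calc c * (G₁ * ε₁) + G₂ * ε₂ = G₁ * (c * ε₁) + G₂ * ε₂ := by ring
      _ ≤ G₁ * (cmax * ε) + G₂ * (cmax * ε) := by gcongr
      _ = cmax * ε * (G₁ + G₂) := by ring
      _ ≤ cmax * ε * (M * m) := by gcongr
  have h_level : cmax * M * ε ≤ η * (v₁ + v₂) := by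
    have hW : c * v₁ + v₂ ≤ cmax * (v₁ + v₂) := by
      nlinarith [le_max_left c 1, le_max_right c 1]
    refine le_of_mul_le_mul_left ?_ hcmax
    calc cmax * (cmax * M * ε) = cmax ^ 2 * M * ε := by ring
      _ ≤ η * (cmax * (v₁ + v₂)) := hK.trans (by gcongr; exact hKv.trans hW)
      _ = cmax * (η * (v₁ + v₂)) := by ring
  calc c * d₁ + d₂
      ≤ c * (-A₁ * v₁ + l₁ * A₂ * v₂) + (-A₂ * v₂ + l₂ * A₁ * v₁) + (c * (G₁ * ε₁) + G₂ * ε₂) := by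
        nlinarith [mul_le_mul_of_nonneg_left hd₁ hc]
    _ ≤ -(η * m * (v₁ + v₂)) + cmax * ε * (M * m) := add_le_add h_gain h_dist
    _ = m * (cmax * M * ε - η * (v₁ + v₂)) := by ring
    _ ≤ 0 := mul_nonpos_of_nonneg_of_nonpos hm (by linarith)

theorem weighted_sum_le_max_of_small_gain {v₁ v₂ A₁ A₂ G₁ G₂ : ℝ → ℝ}
    {a b c l₁ l₂ ε₁ ε₂ M K : ℝ} (hc : 0 ≤ c) (hl₂c : l₂ ≤ c) (hcl₁ : c * l₁ ≤ 1) (hε₁ : 0 ≤ ε₁)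
    (hK : max c 1 ^ 2 * M * max ε₁ ε₂ ≤ min (c - l₂) (1 - c * l₁) * K)
    (hA₁ : ∀ x ∈ Icc a b, 0 ≤ A₁ x) (hA₂ : ∀ x ∈ Icc a b, 0 ≤ A₂ x)
    (hG₁ : ∀ x ∈ Icc a b, 0 ≤ G₁ x) (hG₂ : ∀ x ∈ Icc a b, 0 ≤ G₂ x)
    (hGA : ∀ x ∈ Icc a b, G₁ x + G₂ x ≤ M * min (A₁ x) (A₂ x))
    (hv₁ : ∀ x ∈ Icc a b, 0 ≤ v₁ x) (hv₂ : ∀ x ∈ Icc a b, 0 ≤ v₂ x)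
    (hD₁ : ∀ x ∈ Icc a b, ∃ d, HasDerivAt v₁ d x ∧
      d ≤ -A₁ x * v₁ x + l₁ * A₂ x * v₂ x + G₁ x * ε₁)
    (hD₂ : ∀ x ∈ Icc a b, ∃ d, HasDerivAt v₂ d x ∧
      d ≤ -A₂ x * v₂ x + l₂ * A₁ x * v₁ x + G₂ x * ε₂) :
    ∀ x ∈ Icc a b, c * v₁ x + v₂ x ≤ max (c * v₁ a + v₂ a) K := by
  refine image_le_max_of_hasDerivAt_nonpos_above (f := fun x => c * v₁ x + v₂ x) fun x hx => ?_
  obtain ⟨d₁, hv₁', hd₁⟩ := hD₁ x hx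
  obtain ⟨d₂, hv₂', hd₂⟩ := hD₂ x hx
  exact ⟨c * d₁ + d₂, (hv₁'.const_mul c).add hv₂', fun hKv =>
    weighted_deriv_nonpos_of_le hc hl₂c hcl₁ (hA₁ x hx) (hA₂ x hx) (hG₁ x hx) (hG₂ x hx)
      (hGA x hx) hε₁ hK (hv₁ x hx) (hv₂ x hx) hKv hd₁ hd₂⟩

theorem weighted_le_of_le_classKInf {E₁ E₂ : Type*} [SeminormedAddGroup E₁]
    [SeminormedAddGroup E₂] {V₁ : E₁ → ℝ} {V₂ : E₂ → ℝ} {αu₁ αu₂ : ℝ → ℝ}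
    (hαu₁ : ClassKInf αu₁) (hαu₂ : ClassKInf αu₂)
    (hV₁ : ∀ x, V₁ x ≤ αu₁ ‖x‖) (hV₂ : ∀ x, V₂ x ≤ αu₂ ‖x‖) {c : ℝ} (hc : 0 ≤ c)
    (y₁ : E₁) (y₂ : E₂) :
    c * V₁ y₁ + V₂ y₂ ≤ max c 1 * (αu₁ (‖y₁‖ + ‖y₂‖) + αu₂ (‖y₁‖ + ‖y₂‖)) := by
  have hr : ‖y₁‖ + ‖y₂‖ ∈ Ici 0 := add_nonneg (norm_nonneg _) (norm_nonneg _)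
  have h₁ : V₁ y₁ ≤ αu₁ (‖y₁‖ + ‖y₂‖) := (hV₁ y₁).trans <|
    hαu₁.2.1.monotoneOn (norm_nonneg _) hr (le_add_of_nonneg_right (norm_nonneg _))
  have h₂ : V₂ y₂ ≤ αu₂ (‖y₁‖ + ‖y₂‖) := (hV₂ y₂).trans <|
    hαu₂.2.1.monotoneOn (norm_nonneg _) hr (le_add_of_nonneg_left (norm_nonneg _))
  have hu₁ := hαu₁.nonneg hr
  have hu₂ := hαu₂.nonneg hr
  nlinarith [le_max_left c 1, le_max_right c 1]

theorem exists_norm_add_le_of_weighted_le {E₁ E₂ : Type*} [SeminormedAddGroup E₁]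
    [SeminormedAddGroup E₂] {V₁ : E₁ → ℝ} {V₂ : E₂ → ℝ} {αl₁ αu₁ αl₂ αu₂ : ℝ → ℝ}
    (hαl₁ : ClassKInf αl₁) (hαu₁ : ClassKInf αu₁) (hαl₂ : ClassKInf αl₂) (hαu₂ : ClassKInf αu₂)
    (hV₁ : ∀ x, αl₁ ‖x‖ ≤ V₁ x ∧ V₁ x ≤ αu₁ ‖x‖) (hV₂ : ∀ x, αl₂ ‖x‖ ≤ V₂ x ∧ V₂ x ≤ αu₂ ‖x‖)
    {c K : ℝ} (hc : 0 < c) (hK : 0 ≤ K) :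
    ∃ αTil : ℝ → ℝ, ContinuousOn αTil (Ici 0) ∧ StrictMonoOn αTil (Ici 0) ∧
      ∀ x₁ x₂ y₁ y₂, c * V₁ x₁ + V₂ x₂ ≤ max (c * V₁ y₁ + V₂ y₂) K →
        ‖x₁‖ + ‖x₂‖ ≤ αTil (‖y₁‖ + ‖y₂‖) := by
  obtain ⟨ψ₁, hψ₁c, hψ₁m, hψ₁⟩ := hαl₁.exists_leftInvOn
  obtain ⟨ψ₂, hψ₂c, hψ₂m, hψ₂⟩ := hαl₂.exists_leftInvOn
  have hcmin : 0 < min c 1 := lt_min hc one_pos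
  set P : ℝ → ℝ := fun r => (max c 1 * (αu₁ r + αu₂ r) + K) / min c 1
  have hP_maps : MapsTo P (Ici 0) (Ici 0) := fun r hr => by
    have := hαu₁.nonneg hr; have := hαu₂.nonneg hr
    exact div_nonneg (by positivity) hcmin.le
  have hP_mono : StrictMonoOn P (Ici 0) := fun r hr s hs hrs => by
    have := hαu₁.2.1 hr hs hrs; have := hαu₂.2.1 hr hs hrs
    exact div_lt_div_of_pos_right (by gcongr) hcmin
  have hP_cont : ContinuousOn P (Ici 0) :=
    ((continuousOn_const.mul (hαu₁.1.add hαu₂.1)).add continuousOn_const).div_const _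
  refine ⟨fun r => ψ₁ (P r) + ψ₂ (P r), (hψ₁c.comp hP_cont hP_maps).add (hψ₂c.comp hP_cont hP_maps),
    (hψ₁m.comp hP_mono hP_maps).add_monotone (hψ₂m.comp hP_mono hP_maps).monotoneOn, ?_⟩
  intro x₁ x₂ y₁ y₂ h
  have hr : ‖y₁‖ + ‖y₂‖ ∈ Ici 0 := add_nonneg (norm_nonneg _) (norm_nonneg _)
  have hx : c * V₁ x₁ + V₂ x₂ ≤ min c 1 * P (‖y₁‖ + ‖y₂‖) := by
    rw [mul_div_cancel₀ _ hcmin.ne']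
    exact h.trans (max_le_max (weighted_le_of_le_classKInf hαu₁ hαu₂ (fun x => (hV₁ x).2)
      (fun x => (hV₂ x).2) hc.le y₁ y₂) le_rfl |>.trans (max_le_add_of_nonneg
      (by have := hαu₁.nonneg hr; have := hαu₂.nonneg hr; positivity) hK))
  have hV₁₀ := (hαl₁.nonneg (norm_nonneg x₁)).trans (hV₁ x₁).1
  have hV₂₀ := (hαl₂.nonneg (norm_nonneg x₂)).trans (hV₂ x₂).1
  have hx₁ : αl₁ ‖x₁‖ ≤ P (‖y₁‖ + ‖y₂‖) := le_of_mul_le_mul_left (by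
    nlinarith [(hV₁ x₁).1, min_le_left c 1]) hcmin
  have hx₂ : αl₂ ‖x₂‖ ≤ P (‖y₁‖ + ‖y₂‖) := le_of_mul_le_mul_left (by
    nlinarith [(hV₂ x₂).1, min_le_right c 1]) hcmin
  calc ‖x₁‖ + ‖x₂‖ = ψ₁ (αl₁ ‖x₁‖) + ψ₂ (αl₂ ‖x₂‖) := by
        rw [hψ₁ (norm_nonneg x₁), hψ₂ (norm_nonneg x₂)]
    _ ≤ ψ₁ (P (‖y₁‖ + ‖y₂‖)) + ψ₂ (P (‖y₁‖ + ‖y₂‖)) := add_le_add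
        (hψ₁m.monotoneOn (hαl₁.nonneg (norm_nonneg _)) (hP_maps hr) hx₁)
        (hψ₂m.monotoneOn (hαl₂.nonneg (norm_nonneg _)) (hP_maps hr) hx₂)

theorem prescribed_time_small_gain_general
    {E₁ E₂ : Type*} [NormedAddCommGroup E₁]
    [NormedAddCommGroup E₂]
    (t₀ T b : ℝ) (hb : 0 < b)
    (μ : ℝ → ℝ)
    (hμb : ∀ t ∈ Ico t₀ (t₀ + T), b ≤ μ t)
    (V₁ : E₁ → ℝ) (V₂ : E₂ → ℝ)
    (αl₁ αu₁ αl₂ αu₂ α₁ α₂ γ₁ γ₂ : ℝ → ℝ)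
    (hαl₁ : ClassKInf αl₁) (hαu₁ : ClassKInf αu₁)
    (hαl₂ : ClassKInf αl₂) (hαu₂ : ClassKInf αu₂)
    (hα₁ : ClassKInf α₁) (hα₂ : ClassKInf α₂)
    (hγ₁ : ClassKInf γ₁) (hγ₂ : ClassKInf γ₂)
    (l₁ l₂ ε₁ ε₂ : ℝ) (hl₁ : 0 < l₁) (hl₂ : 0 < l₂)
    (hε₁ : 0 ≤ ε₁)
    (hV₁ : ∀ x : E₁, αl₁ ‖x‖ ≤ V₁ x ∧ V₁ x ≤ αu₁ ‖x‖)
    (hV₂ : ∀ x : E₂, αl₂ ‖x‖ ≤ V₂ x ∧ V₂ x ≤ αu₂ ‖x‖)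
    (hll : l₁ * l₂ < 1)
    (M : ℝ) (hM : ∀ s : ℝ, 0 < s → (γ₁ s + γ₂ s) / min (α₁ s) (α₂ s) ≤ M) :
    ∃ αTil : ℝ → ℝ, ContinuousOn αTil (Ici 0) ∧ StrictMonoOn αTil (Ici 0) ∧
      ∀ (χ₁ : ℝ → E₁) (χ₂ : ℝ → E₂),
        ContinuousOn χ₁ (Ico t₀ (t₀ + T)) →
        ContinuousOn χ₂ (Ico t₀ (t₀ + T)) →
        (∀ t ∈ Ico t₀ (t₀ + T),
          ∃ d₁ : ℝ, HasDerivAt (fun s => V₁ (χ₁ s)) d₁ t ∧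
            d₁ ≤ -α₁ (μ t) * V₁ (χ₁ t) + l₁ * α₂ (μ t) * V₂ (χ₂ t)
                  + γ₁ (μ t) * ε₁) →
        (∀ t ∈ Ico t₀ (t₀ + T),
          ∃ d₂ : ℝ, HasDerivAt (fun s => V₂ (χ₂ s)) d₂ t ∧
            d₂ ≤ -α₂ (μ t) * V₂ (χ₂ t) + l₂ * α₁ (μ t) * V₁ (χ₁ t)
                  + γ₂ (μ t) * ε₂) →
        ∀ t ∈ Ico t₀ (t₀ + T),
          ‖χ₁ t‖ + ‖χ₂ t‖ ≤ αTil (‖χ₁ t₀‖ + ‖χ₂ t₀‖) := by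
  obtain ⟨c, hc, hl₂c, hcl₁⟩ := exists_small_gain_weight hl₁ hl₂ hll
  have hη : 0 < min (c - l₂) (1 - c * l₁) := lt_min (by linarith) (by linarith)
  have hM₀ : 0 ≤ M := (div_nonneg (add_nonneg (hγ₁.nonneg hb.le) (hγ₂.nonneg hb.le))
    (le_min (hα₁.pos hb).le (hα₂.pos hb).le)).trans (hM b hb)
  set K := max c 1 ^ 2 * M * max ε₁ ε₂ / min (c - l₂) (1 - c * l₁)
  have hK₀ : 0 ≤ K := div_nonneg (mul_nonneg (by positivity) (hε₁.trans (le_max_left _ _))) hη.le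
  have hK : max c 1 ^ 2 * M * max ε₁ ε₂ ≤ min (c - l₂) (1 - c * l₁) * K :=
    (mul_div_cancel₀ _ hη.ne').ge
  obtain ⟨αTil, hcont, hmono, hbound⟩ :=
    exists_norm_add_le_of_weighted_le hαl₁ hαu₁ hαl₂ hαu₂ hV₁ hV₂ hc hK₀
  refine ⟨αTil, hcont, hmono, fun χ₁ χ₂ _ _ hD₁ hD₂ t ht => hbound _ _ _ _ ?_⟩
  have hsub : Icc t₀ t ⊆ Ico t₀ (t₀ + T) := Icc_subset_Ico_right ht.2
  have hμ : ∀ x ∈ Icc t₀ t, 0 < μ x := fun x hx => hb.trans_le (hμb x (hsub hx))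
  exact weighted_sum_le_max_of_small_gain (v₁ := fun s => V₁ (χ₁ s)) (v₂ := fun s => V₂ (χ₂ s))
    hc.le hl₂c.le hcl₁.le hε₁ hK (fun x hx => (hα₁.pos (hμ x hx)).le)
    (fun x hx => (hα₂.pos (hμ x hx)).le) (fun x hx => hγ₁.nonneg (hμ x hx).le)
    (fun x hx => hγ₂.nonneg (hμ x hx).le)
    (fun x hx => hα₁.add_le_mul_min hα₂ (hμ x hx) (hM _ (hμ x hx)))
    (fun _ _ => (hαl₁.nonneg (norm_nonneg _)).trans (hV₁ _).1)
    (fun _ _ => (hαl₂.nonneg (norm_nonneg _)).trans (hV₂ _).1)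
    (fun x hx => hD₁ x (hsub hx)) (fun x hx => hD₂ x (hsub hx)) t ⟨ht.1, le_rfl⟩

/-- Prescribed-time small-gain criterion (Theorem 1 of the paper). -/
theorem prescribed_time_small_gain
    {E₁ E₂ : Type*} [NormedAddCommGroup E₁] [NormedSpace ℝ E₁]
    [NormedAddCommGroup E₂] [NormedSpace ℝ E₂]
    (t₀ T b : ℝ) (hT : 0 < T) (hb : 0 < b)
    (μ : ℝ → ℝ) (hμc : ContinuousOn μ (Ico t₀ (t₀ + T)))
    (hμb : ∀ t ∈ Ico t₀ (t₀ + T), b ≤ μ t)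
    (V₁ : E₁ → ℝ) (V₂ : E₂ → ℝ)
    (αl₁ αu₁ αl₂ αu₂ α₁ α₂ γ₁ γ₂ : ℝ → ℝ)
    (hαl₁ : ClassKInf αl₁) (hαu₁ : ClassKInf αu₁)
    (hαl₂ : ClassKInf αl₂) (hαu₂ : ClassKInf αu₂)
    (hα₁ : ClassKInf α₁) (hα₂ : ClassKInf α₂)
    (hγ₁ : ClassKInf γ₁) (hγ₂ : ClassKInf γ₂)
    (l₁ l₂ ε₁ ε₂ : ℝ) (hl₁ : 0 < l₁) (hl₂ : 0 < l₂)
    (hε₁ : 0 ≤ ε₁) (hε₂ : 0 ≤ ε₂)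
    (hV₁ : ∀ x : E₁, αl₁ ‖x‖ ≤ V₁ x ∧ V₁ x ≤ αu₁ ‖x‖)
    (hV₂ : ∀ x : E₂, αl₂ ‖x‖ ≤ V₂ x ∧ V₂ x ≤ αu₂ ‖x‖)
    (hll : l₁ * l₂ < 1)
    (M : ℝ) (hM : ∀ s : ℝ, 0 < s → (γ₁ s + γ₂ s) / min (α₁ s) (α₂ s) ≤ M) :
    ∃ αTil : ℝ → ℝ, ContinuousOn αTil (Ici 0) ∧ StrictMonoOn αTil (Ici 0) ∧
      ∀ (χ₁ : ℝ → E₁) (χ₂ : ℝ → E₂),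
        ContinuousOn χ₁ (Ico t₀ (t₀ + T)) →
        ContinuousOn χ₂ (Ico t₀ (t₀ + T)) →
        (∀ t ∈ Ico t₀ (t₀ + T),
          ∃ d₁ : ℝ, HasDerivAt (fun s => V₁ (χ₁ s)) d₁ t ∧
            d₁ ≤ -α₁ (μ t) * V₁ (χ₁ t) + l₁ * α₂ (μ t) * V₂ (χ₂ t)
                  + γ₁ (μ t) * ε₁) →
        (∀ t ∈ Ico t₀ (t₀ + T),
          ∃ d₂ : ℝ, HasDerivAt (fun s => V₂ (χ₂ s)) d₂ t ∧
            d₂ ≤ -α₂ (μ t) * V₂ (χ₂ t) + l₂ * α₁ (μ t) * V₁ (χ₁ t)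
                  + γ₂ (μ t) * ε₂) →
        ∀ t ∈ Ico t₀ (t₀ + T),
          ‖χ₁ t‖ + ‖χ₂ t‖ ≤ αTil (‖χ₁ t₀‖ + ‖χ₂ t₀‖) :=
  prescribed_time_small_gain_general t₀ T b hb μ hμb V₁ V₂ αl₁ αu₁ αl₂ αu₂ α₁ α₂ γ₁ γ₂ hαl₁ hαu₁
    hαl₂ hαu₂ hα₁ hα₂ hγ₁ hγ₂ l₁ l₂ ε₁ ε₂ hl₁ hl₂ hε₁ hV₁ hV₂ hll M hM
end

section
/- Let V₁, V₂, a₁, a₂, g₁, g₂, e₁, e₂ be nonnegative real numbers and let l₁, l₂ > 0 satisfy l₁·l₂ < 1. Then l₂·(−a₁·V₁ + l₁·a₂·V₂ + g₁·e₁) + √(l₁·l₂)·(−a₂·V₂ + l₂·a₁·V₁ + g₂·e₂) ≤ −(1 − √(l₁·l₂))·min{a₁, a₂}·(l₂·V₁ + √(l₁·l₂)·V₂) + max{g₁, g₂}·(l₂·e₁ + √(l₁·l₂)·e₂). -/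
/-- Key algebraic inequality in the proof of the prescribed-time small-gain
criterion. -/
theorem small_gain_algebraic_inequality
    (V₁ V₂ a₁ a₂ g₁ g₂ e₁ e₂ : ℝ)
    (hV₁ : 0 ≤ V₁) (hV₂ : 0 ≤ V₂) (ha₁ : 0 ≤ a₁) (ha₂ : 0 ≤ a₂)
    (hg₁ : 0 ≤ g₁) (hg₂ : 0 ≤ g₂) (he₁ : 0 ≤ e₁) (he₂ : 0 ≤ e₂)
    (l₁ l₂ : ℝ) (hl₁ : 0 < l₁) (hl₂ : 0 < l₂) (hll : l₁ * l₂ < 1) :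
    l₂ * (-a₁ * V₁ + l₁ * a₂ * V₂ + g₁ * e₁)
      + Real.sqrt (l₁ * l₂) * (-a₂ * V₂ + l₂ * a₁ * V₁ + g₂ * e₂)
    ≤ -(1 - Real.sqrt (l₁ * l₂)) * min a₁ a₂
        * (l₂ * V₁ + Real.sqrt (l₁ * l₂) * V₂)
      + max g₁ g₂ * (l₂ * e₁ + Real.sqrt (l₁ * l₂) * e₂) := by
  set s := Real.sqrt (l₁ * l₂) with hs
  have hs0 : 0 ≤ s := Real.sqrt_nonneg _
  have hs1 : s < 1 := by
    rw [hs, show (1:ℝ) = Real.sqrt 1 by simp]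
    exact Real.sqrt_lt_sqrt (by positivity) hll
  have hss : s * s = l₁ * l₂ := Real.mul_self_sqrt (by positivity)
  have h1 : min a₁ a₂ ≤ a₁ := min_le_left _ _
  have h2 : min a₁ a₂ ≤ a₂ := min_le_right _ _
  have h3 : g₁ ≤ max g₁ g₂ := le_max_left _ _
  have h4 : g₂ ≤ max g₁ g₂ := le_max_right _ _
  have hm0 : 0 ≤ min a₁ a₂ := le_min ha₁ ha₂
  have key1 : (1-s) * min a₁ a₂ * (l₂*V₁) ≤ (1-s) * a₁ * (l₂*V₁) :=
    mul_le_mul_of_nonneg_right (mul_le_mul_of_nonneg_left h1 (by linarith)) (by positivity)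
  have key2 : (1-s) * min a₁ a₂ * (s*V₂) ≤ (1-s) * a₂ * (s*V₂) :=
    mul_le_mul_of_nonneg_right (mul_le_mul_of_nonneg_left h2 (by linarith)) (by positivity)
  have key3 : g₁*(l₂*e₁) ≤ max g₁ g₂ * (l₂*e₁) :=
    mul_le_mul_of_nonneg_right h3 (by positivity)
  have key4 : g₂*(s*e₂) ≤ max g₁ g₂ * (s*e₂) :=
    mul_le_mul_of_nonneg_right h4 (by positivity)
  have hL : l₂ * (-a₁ * V₁ + l₁ * a₂ * V₂ + g₁ * e₁)
      + s * (-a₂ * V₂ + l₂ * a₁ * V₁ + g₂ * e₂)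
      = -((1-s) * a₁ * (l₂*V₁)) - (1-s) * a₂ * (s*V₂) + g₁*(l₂*e₁) + g₂*(s*e₂) := by
    linear_combination -a₂ * V₂ * hss
  have hR : -(1 - s) * min a₁ a₂ * (l₂ * V₁ + s * V₂) + max g₁ g₂ * (l₂ * e₁ + s * e₂)
      = -((1-s) * min a₁ a₂ * (l₂*V₁)) - (1-s) * min a₁ a₂ * (s*V₂)
        + max g₁ g₂ * (l₂*e₁) + max g₁ g₂ * (s*e₂) := by ring
  rw [hL, hR]
  linarith
end

section
/- Let E be a real inner product space, let t₀ ∈ ℝ, T > 0, b̃ ≥ 0, and let μ : [t₀, t₀+T) → ℝ be differentiable with μ(t) > 0 and μ′(t) ≤ b̃·μ(t)² for all t ∈ [t₀, t₀+T). Let k, k* > 0 satisfy k ≥ k*/2 + b̃ + 1/2. Let d̄ ≥ 0 and let χ : [t₀, t₀+T) → E and d : [t₀, t₀+T) → E be such that χ is differentiable with χ′(t) = −k·μ(t)·χ(t) + d(t) and ‖d(t)‖ ≤ d̄ for all t ∈ [t₀, t₀+T). Then for every t ∈ [t₀, t₀+T), ‖χ(t)‖ ≤ (μ(t₀)²·‖χ(t₀)‖²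 + d̄²/k*)^{1/2} · μ(t)⁻¹. -/
/-!
The Lyapunov function `V = μ² ‖χ‖²` of the scaled state `μ χ` satisfies
`V' ≤ k* μ (d̄²/k* - V)`: the growth bound on `μ` and Young's inequality for the disturbance
term are absorbed by the gain condition on `k`. Since `μ > 0`, `V` can never cross a level
above `d̄²/k*`, so `V ≤ μ(t₀)² ‖χ(t₀)‖² + d̄²/k*`, which is the claimed bound after taking
square roots.
-/

open Set

theorem le_of_hasDerivWithinAt_le_mul_sub {f f' m : ℝ → ℝ} {a b c₀ c : ℝ}
    (hf : ContinuousOn f (Icc a b)) (hf' : ∀ x ∈ Ico a b, HasDerivWithinAt f (f' x) (Ici x) x)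
    (hm : ∀ x ∈ Ico a b, 0 < m x) (hbound : ∀ x ∈ Ico a b, f' x ≤ m x * (c₀ - f x))
    (hc : c₀ ≤ c) (ha : f a ≤ c) : ∀ ⦃x⦄, x ∈ Icc a b → f x ≤ c := by
  intro x hx
  refine le_of_forall_pos_le_add fun ε hε => ?_
  -- The barrier `c + ε` lies strictly above `c₀`, so `f` crosses it only while decreasing.
  refine image_le_of_deriv_right_lt_deriv_boundary hf hf' (B' := 0)
    (by linarith) (fun _ => hasDerivAt_const _ (c + ε)) (fun y hy hfy => ?_) hx
  calc f' y ≤ m y * (c₀ - f y) := hbound y hy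
    _ < 0 := mul_neg_of_pos_of_neg (hm y hy) (by linarith)

theorem sq_mul_norm_sq_deriv_le {E : Type*} [NormedAddCommGroup E] [InnerProductSpace ℝ E]
    {x d : E} {m m' b k kstar dbar : ℝ} (hm : 0 < m) (hm' : m' ≤ b * m ^ 2)
    (hkstar : 0 < kstar) (hkk : kstar / 2 + b + 1 / 2 ≤ k) (hd : ‖d‖ ≤ dbar) :
    2 * m * m' * ‖x‖ ^ 2 + m ^ 2 * (2 * inner ℝ x (-(k * m) • x + d))
      ≤ kstar * m * (dbar ^ 2 / kstar - m ^ 2 * ‖x‖ ^ 2) := by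
  have hinner : inner ℝ x (-(k * m) • x + d) ≤ -(k * m) * ‖x‖ ^ 2 + ‖x‖ * dbar := by
    rw [inner_add_right, real_inner_smul_right, real_inner_self_eq_norm_sq]
    gcongr
    exact (real_inner_le_norm x d).trans (by gcongr)
  have hyoung : 2 * m ^ 2 * (‖x‖ * dbar) ≤ m ^ 3 * ‖x‖ ^ 2 + m * dbar ^ 2 := by
    nlinarith [mul_nonneg hm.le (sq_nonneg (m * ‖x‖ - dbar))]
  have hgrowth : 2 * m * m' * ‖x‖ ^ 2 ≤ 2 * b * m ^ 3 * ‖x‖ ^ 2 := by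
    have := mul_le_mul_of_nonneg_left hm' (by positivity : 0 ≤ 2 * m * ‖x‖ ^ 2)
    linarith
  have hcancel : kstar * m * (dbar ^ 2 / kstar) = m * dbar ^ 2 := by field_simp
  rw [mul_sub, hcancel]
  nlinarith [mul_le_mul_of_nonneg_left hinner (by positivity : 0 ≤ 2 * m ^ 2),
    mul_nonneg (by linarith : 0 ≤ 2 * k - 2 * b - 1 - kstar)
      (by positivity : 0 ≤ m ^ 3 * ‖x‖ ^ 2)]

theorem le_rpow_one_half_mul_inv_of_sq_mul_sq_le {x C m : ℝ} (hm : 0 < m)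
    (h : m ^ 2 * x ^ 2 ≤ C) : x ≤ C ^ ((1 : ℝ) / 2) * m⁻¹ := by
  rw [← Real.sqrt_eq_rpow, ← div_eq_mul_inv, le_div_iff₀ hm, mul_comm]
  exact Real.le_sqrt_of_sq_le (by rwa [mul_pow])

theorem prescribed_time_disturbed_system_general
    {E : Type*} [NormedAddCommGroup E] [InnerProductSpace ℝ E]
    (t₀ T btil : ℝ)
    (μ μ' : ℝ → ℝ)
    (hμderiv : ∀ t ∈ Ico t₀ (t₀ + T), HasDerivAt μ (μ' t) t)
    (hμpos : ∀ t ∈ Ico t₀ (t₀ + T), 0 < μ t)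
    (hμ' : ∀ t ∈ Ico t₀ (t₀ + T), μ' t ≤ btil * (μ t) ^ 2)
    (k kstar : ℝ) (hkstar : 0 < kstar)
    (hkk : kstar / 2 + btil + 1 / 2 ≤ k)
    (dbar : ℝ)
    (χ d : ℝ → E)
    (hχ : ∀ t ∈ Ico t₀ (t₀ + T),
      HasDerivAt χ (-(k * μ t) • χ t + d t) t)
    (hd : ∀ t ∈ Ico t₀ (t₀ + T), ‖d t‖ ≤ dbar) :
    ∀ t ∈ Ico t₀ (t₀ + T),
      ‖χ t‖ ≤ (μ t₀ ^ 2 * ‖χ t₀‖ ^ 2 + dbar ^ 2 / kstar) ^ ((1 : ℝ) / 2)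
        * (μ t)⁻¹ := by
  rintro t ⟨ht₀, htT⟩
  have hsub : Icc t₀ t ⊆ Ico t₀ (t₀ + T) := fun s hs => ⟨hs.1, hs.2.trans_lt htT⟩
  have hV : ∀ s ∈ Ico t₀ (t₀ + T), HasDerivAt (fun s => μ s ^ 2 * ‖χ s‖ ^ 2)
      (2 * μ s * μ' s * ‖χ s‖ ^ 2
        + μ s ^ 2 * (2 * inner ℝ (χ s) (-(k * μ s) • χ s + d s))) s := fun s hs =>
    (((hμderiv s hs).fun_pow 2).fun_mul (hχ s hs).norm_sq).congr_deriv (by norm_num)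
  have hVt : μ t ^ 2 * ‖χ t‖ ^ 2 ≤ μ t₀ ^ 2 * ‖χ t₀‖ ^ 2 + dbar ^ 2 / kstar :=
    le_of_hasDerivWithinAt_le_mul_sub (m := fun s => kstar * μ s) (c₀ := dbar ^ 2 / kstar)
      (fun s hs => (hV s (hsub hs)).continuousAt.continuousWithinAt)
      (fun s hs => (hV s (hsub (Ico_subset_Icc_self hs))).hasDerivWithinAt)
      (fun s hs => mul_pos hkstar (hμpos s (hsub (Ico_subset_Icc_self hs))))
      (fun s hs => have hs' := hsub (Ico_subset_Icc_self hs)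
        sq_mul_norm_sq_deriv_le (hμpos s hs') (hμ' s hs') hkstar hkk (hd s hs'))
      (le_add_of_nonneg_left (by positivity)) (le_add_of_nonneg_right (by positivity))
      (right_mem_Icc.2 ht₀)
  exact le_rpow_one_half_mul_inv_of_sq_mul_sq_le (hμpos t ⟨ht₀, htT⟩) hVt

/-- Prescribed-time convergence of the disturbed system χ̇ = −kμχ + d
(Remark 2 of the paper). -/
theorem prescribed_time_disturbed_system
    {E : Type*} [NormedAddCommGroup E] [InnerProductSpace ℝ E]
    (t₀ T btil : ℝ) (hT : 0 < T) (hbtil : 0 ≤ btil)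
    (μ μ' : ℝ → ℝ)
    (hμderiv : ∀ t ∈ Ico t₀ (t₀ + T), HasDerivAt μ (μ' t) t)
    (hμpos : ∀ t ∈ Ico t₀ (t₀ + T), 0 < μ t)
    (hμ' : ∀ t ∈ Ico t₀ (t₀ + T), μ' t ≤ btil * (μ t) ^ 2)
    (k kstar : ℝ) (hk : 0 < k) (hkstar : 0 < kstar)
    (hkk : kstar / 2 + btil + 1 / 2 ≤ k)
    (dbar : ℝ) (hdbar : 0 ≤ dbar)
    (χ d : ℝ → E)
    (hχ : ∀ t ∈ Ico t₀ (t₀ + T),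
      HasDerivAt χ (-(k * μ t) • χ t + d t) t)
    (hd : ∀ t ∈ Ico t₀ (t₀ + T), ‖d t‖ ≤ dbar) :
    ∀ t ∈ Ico t₀ (t₀ + T),
      ‖χ t‖ ≤ (μ t₀ ^ 2 * ‖χ t₀‖ ^ 2 + dbar ^ 2 / kstar) ^ ((1 : ℝ) / 2)
        * (μ t)⁻¹ :=
  prescribed_time_disturbed_system_general t₀ T btil μ μ' hμderiv hμpos hμ' k kstar hkstar hkk dbar
    χ d hχ hd
end

section
/- Let N ≥ 1 and n ≥ 1, let E = EuclideanSpace ℝ (Fin n), and let L be an N × N real matrix satisfying: (a) ∑_j L i j = 0 for every row i and ∑_i L i j = 0 for every column j; (b) for every x : Fin N → ℝ, if ∑_j L i j · x j = 0 for all i, then there is a constant c with x i = c for all i (the kernel condition satisfied by the Laplacian of a connected undirected graph). For each i let fⁱ : E → ℝ be differentiable and convex, with gradient ∇fⁱ. Suppose y, v : Fin N → E satisfy: (1) ∑_j L i j • y j = 0 for all i; (2) ∇fⁱ(y i) + ∑_j L i j • y j + v i = 0 for all i; (3) ∑_i v i = 0. Then there exists z* ∈ E such that y i = z* for all i, ∑_i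 ∇fⁱ(z*) = 0, v i = −∇fⁱ(z*) for all i, and z* is a global minimizer of the function x ↦ ∑_i fⁱ(x). -/
open Set

/-!
The kernel condition on `L`, applied coordinatewise to the first equilibrium equation, forces
consensus `y i = z`. The second equation then reads `v i = -∇fⁱ(z)`, so `∑ v i = 0` says
`∑ ∇fⁱ(z) = 0`. Summing the first-order convexity inequalities `fⁱ z + ⟪∇fⁱ z, x - z⟫ ≤ fⁱ x`
makes the gradient terms cancel, so `z` minimizes `∑ fⁱ`.
-/

theorem ConvexOn.add_fderiv_sub_le {E : Type*} [NormedAddCommGroup E] [NormedSpace ℝ E]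
    {g : E → ℝ} {g' : E →L[ℝ] ℝ} {z : E} (hg : ConvexOn ℝ univ g) (hg' : HasFDerivAt g g' z)
    (x : E) : g z + g' (x - z) ≤ g x := by
  -- On the line `t ↦ z + t • (x - z)`, the slope of a convex function over `[0, 1]`
  -- dominates its derivative at `0`.
  let A : ℝ →ᵃ[ℝ] E := AffineMap.lineMap z x
  have hA : ∀ t : ℝ, A t = t • (x - z) + z := fun t => AffineMap.lineMap_apply_module' z x t
  have hconv : ConvexOn ℝ univ (g ∘ A) := by simpa using hg.comp_affineMap A
  have hline : HasDerivAt A (x - z) 0 := by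
    simpa [funext hA] using ((hasDerivAt_id (0 : ℝ)).smul_const (x - z)).add_const z
  have hderiv : HasDerivAt (g ∘ A) (g' (x - z)) 0 := by
    refine HasFDerivAt.comp_hasDerivAt (0 : ℝ) ?_ hline
    simpa [hA] using hg'
  have hslope := hconv.le_slope_of_hasDerivAt (mem_univ 0) (mem_univ 1) one_pos hderiv
  simp only [slope_def_field, Function.comp_apply, hA] at hslope
  simp only [sub_zero, div_one, one_smul, sub_add_cancel, zero_smul, zero_add] at hslope
  linarith

theorem ConvexOn.add_inner_gradient_sub_le {E : Type*} [NormedAddCommGroup E]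
    [InnerProductSpace ℝ E] [CompleteSpace E] {g : E → ℝ} {z : E} (hg : ConvexOn ℝ univ g)
    (hgz : DifferentiableAt ℝ g z) (x : E) : g z + inner ℝ (gradient g z) (x - z) ≤ g x := by
  simpa using hg.add_fderiv_sub_le (hasGradientAt_iff_hasFDerivAt.mp hgz.hasGradientAt) x

theorem Matrix.exists_forall_eq_of_sum_smul_eq_zero {ι κ : Type*} [Fintype ι]
    (L : Matrix ι ι ℝ)
    (hker : ∀ x : ι → ℝ, (∀ i, ∑ j, L i j * x j = 0) → ∃ c, ∀ i, x i = c)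
    (y : ι → EuclideanSpace ℝ κ) (hy : ∀ i, ∑ j, L i j • y j = 0) :
    ∃ z, ∀ i, y i = z := by
  have hcoord : ∀ k, ∃ c, ∀ i, y i k = c := fun k =>
    hker (fun i => y i k) fun i => by simpa using congrArg (· k) (hy i)
  choose c hc using hcoord
  exact ⟨WithLp.toLp 2 c, fun i => by ext k; exact hc k i⟩

theorem equilibrium_is_optimal_general
    (N n : ℕ)
    (L : Matrix (Fin N) (Fin N) ℝ)
    (hker : ∀ x : Fin N → ℝ, (∀ i, ∑ j, L i j * x j = 0) → ∃ c, ∀ i, x i = c)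
    (f : Fin N → EuclideanSpace ℝ (Fin n) → ℝ)
    (hdiff : ∀ i, Differentiable ℝ (f i))
    (hconv : ∀ i, ConvexOn ℝ Set.univ (f i))
    (y v : Fin N → EuclideanSpace ℝ (Fin n))
    (h1 : ∀ i, ∑ j, L i j • y j = 0)
    (h2 : ∀ i, gradient (f i) (y i) + ∑ j, L i j • y j + v i = 0)
    (h3 : ∑ i, v i = 0) :
    ∃ zstar : EuclideanSpace ℝ (Fin n),
      (∀ i, y i = zstar) ∧
      (∑ i, gradient (f i) zstar = 0) ∧
      (∀ i, v i = -gradient (f i) zstar) ∧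
      (∀ x : EuclideanSpace ℝ (Fin n), ∑ i, f i zstar ≤ ∑ i, f i x) := by
  obtain ⟨z, hy⟩ := L.exists_forall_eq_of_sum_smul_eq_zero hker y h1
  have hv : ∀ i, v i = -gradient (f i) z := fun i =>
    eq_neg_of_add_eq_zero_right (by simpa [h1 i, hy i] using h2 i)
  have hsum : ∑ i, gradient (f i) z = 0 := by
    rw [← neg_eq_zero, ← Finset.sum_neg_distrib, ← h3]
    exact Finset.sum_congr rfl fun i _ => (hv i).symm
  refine ⟨z, hy, hsum, hv, fun x => ?_⟩
  calc ∑ i, f i z = ∑ i, (f i z + inner ℝ (gradient (f i) z) (x - z)) := by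
        rw [Finset.sum_add_distrib, ← sum_inner, hsum, inner_zero_left, add_zero]
    _ ≤ ∑ i, f i x := Finset.sum_le_sum fun i _ =>
        (hconv i).add_inner_gradient_sub_le (hdiff i z) x

/-- Proposition 1: the equilibrium points of the auxiliary dynamics are
the optimal consensus configuration. -/
theorem equilibrium_is_optimal
    (N n : ℕ) (hN : 1 ≤ N) (hn : 1 ≤ n)
    (L : Matrix (Fin N) (Fin N) ℝ)
    (hrow : ∀ i, ∑ j, L i j = 0) (hcol : ∀ j, ∑ i, L i j = 0)
    (hker : ∀ x : Fin N → ℝ, (∀ i, ∑ j, L i j * x j = 0) → ∃ c, ∀ i, x i = c)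
    (f : Fin N → EuclideanSpace ℝ (Fin n) → ℝ)
    (hdiff : ∀ i, Differentiable ℝ (f i))
    (hconv : ∀ i, ConvexOn ℝ Set.univ (f i))
    (y v : Fin N → EuclideanSpace ℝ (Fin n))
    (h1 : ∀ i, ∑ j, L i j • y j = 0)
    (h2 : ∀ i, gradient (f i) (y i) + ∑ j, L i j • y j + v i = 0)
    (h3 : ∑ i, v i = 0) :
    ∃ zstar : EuclideanSpace ℝ (Fin n),
      (∀ i, y i = zstar) ∧
      (∑ i, gradient (f i) zstar = 0) ∧
      (∀ i, v i = -gradient (f i) zstar) ∧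
      (∀ x : EuclideanSpace ℝ (Fin n), ∑ i, f i zstar ≤ ∑ i, f i x) :=
  equilibrium_is_optimal_general N n L hker f hdiff hconv y v h1 h2 h3
end

section
/- Let E be a real inner product space, let t₀ < t₁, let a : [t₀, t₁) → ℝ be continuous and nonnegative, let σ > 0 and γ ≥ 0, and let θ̂ : [t₀, t₁) → E be such that the map t ↦ ‖θ̂(t)‖² is differentiable on [t₀, t₁) with derivative w(t) satisfying w(t) ≤ −σ·a(t)·‖θ̂(t)‖² + a(t)·γ²/σ for all t ∈ [t₀, t₁). Then ‖θ̂(t)‖ ≤ ‖θ̂(t₀)‖ + γ/σ for every t ∈ [t₀, t₁). -/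
/-!
Along the trajectory, `V = ‖θ̂‖²` satisfies `V' ≤ -σ a (V - (γ/σ)²)` with `σ a ≥ 0`, so `V` can
never be increasing while it lies above the level `max (V t₀) (γ/σ)²`; hence it stays below that
level, and taking square roots gives `‖θ̂ t‖ ≤ max ‖θ̂ t₀‖ (γ/σ) ≤ ‖θ̂ t₀‖ + γ/σ`.
-/

open Set

theorem image_le_of_deriv_right_nonpos_above {f f' : ℝ → ℝ} {a b M : ℝ}
    (hf : ContinuousOn f (Icc a b)) (hf' : ∀ x ∈ Ico a b, HasDerivWithinAt f (f' x) (Ici x) x)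
    (ha : f a ≤ M) (bound : ∀ x ∈ Ico a b, M < f x → f' x ≤ 0) :
    ∀ ⦃x⦄, x ∈ Icc a b → f x ≤ M := by
  intro x hx
  refine le_of_forall_pos_le_add fun δ hδ => ?_
  -- the barrier comparison needs `f' < B'` at contact, hence the strict barrier `M + ε exp`, `ε → 0`
  set ε := δ / Real.exp x
  have hε : 0 < ε := by positivity
  have hbarrier := image_le_of_deriv_right_lt_deriv_boundary (B := fun y => M + ε * Real.exp y)
    hf hf' (by linarith [mul_pos hε (Real.exp_pos a)])
    (fun y => ((Real.hasDerivAt_exp y).const_mul ε).const_add M)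
    (fun y hy hfy => (bound y hy (by rw [hfy]; linarith [mul_pos hε (Real.exp_pos y)])).trans_lt
      (mul_pos hε (Real.exp_pos y))) hx
  rwa [div_mul_cancel₀ δ (Real.exp_pos x).ne'] at hbarrier

theorem le_max_of_hasDerivAt_le_neg_mul_sub {V V' k : ℝ → ℝ} {a b c : ℝ}
    (hV : ∀ x ∈ Ico a b, HasDerivAt V (V' x) x) (hk : ∀ x ∈ Ico a b, 0 ≤ k x)
    (hV' : ∀ x ∈ Ico a b, V' x ≤ -k x * (V x - c)) :
    ∀ x ∈ Ico a b, V x ≤ max (V a) c := by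
  intro x hx
  have hsub : Icc a x ⊆ Ico a b := Icc_subset_Ico_right hx.2
  refine image_le_of_deriv_right_nonpos_above (b := x)
    (fun y hy => (hV y (hsub hy)).continuousAt.continuousWithinAt)
    (fun y hy => (hV y (hsub (Ico_subset_Icc_self hy))).hasDerivWithinAt)
    (le_max_left _ _) (fun y hy hVy => ?_) (right_mem_Icc.2 hx.1)
  have hy := hsub (Ico_subset_Icc_self hy)
  have hc : c < V y := (le_max_right _ _).trans_lt hVy
  nlinarith [hV' y hy, hk y hy]

theorem le_add_of_sq_le_max_sq {u v c : ℝ} (hv : 0 ≤ v) (hc : 0 ≤ c)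
    (h : u ^ 2 ≤ max (v ^ 2) (c ^ 2)) : u ≤ v + c :=
  le_of_sq_le_sq (h.trans (max_le (pow_le_pow_left₀ hv (le_add_of_nonneg_right hc) 2)
    (pow_le_pow_left₀ hc (le_add_of_nonneg_left hv) 2))) (add_nonneg hv hc)

theorem adaptive_estimate_bounded_general
    {E : Type*} [NormedAddCommGroup E] [InnerProductSpace ℝ E]
    (t₀ t₁ : ℝ)
    (a : ℝ → ℝ)
    (ha_nonneg : ∀ t ∈ Ico t₀ t₁, 0 ≤ a t)
    (σ γ : ℝ) (hσ : 0 < σ) (hγ : 0 ≤ γ)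
    (θhat : ℝ → E) (w : ℝ → ℝ)
    (hw : ∀ t ∈ Ico t₀ t₁, HasDerivAt (fun s => ‖θhat s‖ ^ 2) (w t) t)
    (hwb : ∀ t ∈ Ico t₀ t₁,
      w t ≤ -σ * a t * ‖θhat t‖ ^ 2 + a t * γ ^ 2 / σ) :
    ∀ t ∈ Ico t₀ t₁, ‖θhat t‖ ≤ ‖θhat t₀‖ + γ / σ := by
  intro t ht
  have hdrift : ∀ s ∈ Ico t₀ t₁, w s ≤ -(σ * a s) * (‖θhat s‖ ^ 2 - (γ / σ) ^ 2) := fun s hs =>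
    (hwb s hs).trans_eq (by field_simp; ring)
  have hsq : ‖θhat t‖ ^ 2 ≤ max (‖θhat t₀‖ ^ 2) ((γ / σ) ^ 2) :=
    le_max_of_hasDerivAt_le_neg_mul_sub hw (fun s hs => mul_nonneg hσ.le (ha_nonneg s hs))
      hdrift t ht
  exact le_add_of_sq_le_max_sq (norm_nonneg _) (div_nonneg hγ hσ.le) hsq

/-- Boundedness of the adaptive parameter estimate (from the proof of
Lemma 1). -/
theorem adaptive_estimate_bounded
    {E : Type*} [NormedAddCommGroup E] [InnerProductSpace ℝ E]
    (t₀ t₁ : ℝ) (ht : t₀ < t₁)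
    (a : ℝ → ℝ) (ha_cont : ContinuousOn a (Ico t₀ t₁))
    (ha_nonneg : ∀ t ∈ Ico t₀ t₁, 0 ≤ a t)
    (σ γ : ℝ) (hσ : 0 < σ) (hγ : 0 ≤ γ)
    (θhat : ℝ → E) (w : ℝ → ℝ)
    (hw : ∀ t ∈ Ico t₀ t₁, HasDerivAt (fun s => ‖θhat s‖ ^ 2) (w t) t)
    (hwb : ∀ t ∈ Ico t₀ t₁,
      w t ≤ -σ * a t * ‖θhat t‖ ^ 2 + a t * γ ^ 2 / σ) :
    ∀ t ∈ Ico t₀ t₁, ‖θhat t‖ ≤ ‖θhat t₀‖ + γ / σ :=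
  adaptive_estimate_bounded_general t₀ t₁ a ha_nonneg σ γ hσ hγ θhat w hw hwb
end
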